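/- arXiv:1709.05006 — 2 statements merged into one kernel-verified Lean document; each statement's English description precedes it below -/
import Mathlib

section
/- Under the null hypothesis (both X and Y are i.i.d. samples from p), the variance of the scaled empirical MMD satisfies Var(n·T_n) ≤ (2/(ρ_{1,n}ρ_{2,n})²)·Σ_k λ̃_k² + (16/n)·(ρ_{1,n}⁻³ + ρ_{2,n}⁻³), where ρ_{1,n} = n₁/n and ρ_{2,n} = n₂/n. In particular, if n > (16/0.1)·(ρ_{1,n}⁻³ + 4ρ_{2,n}⁻³), then Var(n·T_n) ≤ 32/(ρ_{1,n}ρ_{2,n})² + 0.1. -/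
/-!
Write `Z = (X, Y)` for the pooled sample and `aₛ = 1/n₁` on `X`, `aₛ = -1/n₂` on `Y`. Then
`T_n = ∑ₛ ∑ₜ aₛ aₜ k(Zₛ, Zₜ)`, and since `∑ₛ aₛ = 0` the kernel `k` may be replaced by its
centred version `k̃`. The centred kernel is degenerate, `∫ k̃(x, y) p(y) dy = 0`, so a term
`k̃(Zₛ, Zₜ)` with `s ≠ t` is orthogonal to every function of the `Z_r`, `r ≠ t`. In the covariance
expansion of the quadratic form only equal diagonal terms and off-diagonal pairs with
`{s, t} = {u, v}` survive:
`Var T_n = Var k̃(Z, Z) · ∑ aₛ⁴ + 2 ‖k̃‖²_{L²(p ⊗ p)} · ∑_{s ≠ t} aₛ² aₜ²`.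
By the Mercer expansion `‖k̃‖²_{L²(p ⊗ p)} = ∑ λ̃ₖ²`, and `|k̃| ≤ 4` bounds both this norm and
`Var k̃(Z, Z)` by `16`.
-/

open MeasureTheory ProbabilityTheory Function

theorem hasSum_integral_of_hasSum_mul {α : Type*} [MeasurableSpace α] {ν : Measure α}
    {lam : ℕ → ℝ} {F : ℕ → α → ℝ} {f : α → ℝ} {B : ℝ}
    (hlam : ∀ j, 0 ≤ lam j) (hlam_sum : Summable lam)
    (hF : ∀ j, Integrable (F j) ν) (hFB : ∀ j, ∫ a, |F j a| ∂ν ≤ B)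
    (hf : ∀ a, HasSum (fun j => lam j * F j a) (f a)) :
    HasSum (fun j => lam j * ∫ a, F j a ∂ν) (∫ a, f a ∂ν) := by
  have hnorm : Summable fun j => ∫ a, ‖lam j * F j a‖ ∂ν := by
    refine (hlam_sum.mul_right B).of_nonneg_of_le
      (fun j => integral_nonneg fun _ => norm_nonneg _) fun j => ?_
    simp_rw [norm_mul, Real.norm_eq_abs, abs_of_nonneg (hlam j), integral_const_mul]
    exact mul_le_mul_of_nonneg_left (hFB j) (hlam j)
  simpa only [integral_const_mul, (hf _).tsum_eq] using
    hasSum_integral_of_summable_integral_norm (fun j => (hF j).const_mul (lam j)) hnorm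

theorem integral_abs_mul_le_one {α : Type*} [MeasurableSpace α] {ν : Measure α}
    {f g : α → ℝ} (hf : MemLp f 2 ν) (hg : MemLp g 2 ν)
    (hf1 : ∫ a, f a * f a ∂ν = 1) (hg1 : ∫ a, g a * g a ∂ν = 1) :
    ∫ a, |f a * g a| ∂ν ≤ 1 := by
  have hff : Integrable (fun a => f a * f a) ν := hf.integrable_mul hf
  have hgg : Integrable (fun a => g a * g a) ν := hg.integrable_mul hg
  calc ∫ a, |f a * g a| ∂ν ≤ ∫ a, (f a * f a + g a * g a) / 2 ∂ν :=
        integral_mono_of_nonneg (ae_of_all _ fun _ => abs_nonneg _)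
          ((hff.add hgg).div_const 2) (ae_of_all _ fun a => by
            simp only [abs_mul]
            nlinarith [sq_nonneg (|f a| - |g a|), abs_mul_abs_self (f a),
              abs_mul_abs_self (g a)])
    _ = 1 := by
        rw [integral_div, integral_add hff hgg, hf1, hg1]
        norm_num

theorem memLp_two_of_integral_mul_self_ne_zero {α : Type*} [MeasurableSpace α] {ν : Measure α}
    {f : α → ℝ} (hf : AEStronglyMeasurable f ν) (h : ∫ a, f a * f a ∂ν ≠ 0) : MemLp f 2 ν :=
  (memLp_two_iff_integrable_sq hf).mpr
    (Integrable.of_integral_ne_zero (by simpa only [sq] using h))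

theorem integral_sq_le_of_abs_le {α : Type*} [MeasurableSpace α] {ν : Measure α}
    [IsProbabilityMeasure ν] {f : α → ℝ} {C : ℝ} (hf : ∀ a, |f a| ≤ C) :
    ∫ a, f a ^ 2 ∂ν ≤ C ^ 2 := by
  calc ∫ a, f a ^ 2 ∂ν ≤ ∫ _, C ^ 2 ∂ν :=
        integral_mono_of_nonneg (ae_of_all _ fun _ => sq_nonneg _) (integrable_const _)
          (ae_of_all _ fun a => sq_le_sq' (abs_le.mp (hf a)).1 (abs_le.mp (hf a)).2)
    _ = C ^ 2 := by simp

theorem integral_withDensity_ofReal {α : Type*} [MeasurableSpace α] {ν : Measure α}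
    {p : α → ℝ} (hp : Measurable p) (hp0 : ∀ x, 0 ≤ p x) (f : α → ℝ) :
    ∫ x, f x ∂ν.withDensity (fun x => ENNReal.ofReal (p x)) = ∫ x, f x * p x ∂ν := by
  rw [integral_withDensity_eq_integral_toReal_smul hp.ennreal_ofReal]
  · simp [ENNReal.toReal_ofReal (hp0 _), mul_comm]
  · simp

theorem isProbabilityMeasure_withDensity_ofReal {α : Type*} [MeasurableSpace α]
    {ν : Measure α} {p : α → ℝ} (hp0 : ∀ x, 0 ≤ p x) (hp1 : ∫ x, p x ∂ν = 1) :
    IsProbabilityMeasure (ν.withDensity fun x => ENNReal.ofReal (p x)) := by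
  constructor
  rw [withDensity_apply _ MeasurableSet.univ, Measure.restrict_univ,
    ← ofReal_integral_eq_lintegral_ofReal (Integrable.of_integral_ne_zero (by simp [hp1]))
      (ae_of_all _ hp0), hp1, ENNReal.ofReal_one]

section Mercer

variable {E : Type*} [MeasurableSpace E] {μ : Measure E} [IsProbabilityMeasure μ]
  {g : E → E → ℝ} {lam : ℕ → ℝ} {ψ : ℕ → E → ℝ}

theorem integral_abs_mul_prod_le_one {f : E → ℝ} (hf : MemLp f 2 μ)
    (hf1 : ∫ x, f x * f x ∂μ = 1) {h : E → ℝ} (hh : MemLp h 2 μ)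
    (hh1 : ∫ x, h x * h x ∂μ = 1) :
    ∫ z : E × E, |f z.1 * f z.2 * (h z.1 * h z.2)| ∂(μ.prod μ) ≤ 1 := by
  have key : ∀ z : E × E, |f z.1 * f z.2 * (h z.1 * h z.2)|
      = |f z.1 * h z.1| * |f z.2 * h z.2| := fun z => by rw [← abs_mul]; ring_nf
  simp_rw [key]
  rw [integral_prod_mul (fun x => |f x * h x|) (fun x => |f x * h x|)]
  have hle := integral_abs_mul_le_one hf hh hf1 hh1
  have h0 : 0 ≤ ∫ x, |f x * h x| ∂μ := integral_nonneg fun x => abs_nonneg _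
  nlinarith

variable (hlam : ∀ j, 0 ≤ lam j) (hlam_sum : Summable lam) (hψ : ∀ j, MemLp (ψ j) 2 μ)
  (hon : ∀ j l, ∫ x, ψ j x * ψ l x ∂μ = if j = l then 1 else 0)
  (hM : ∀ x y, HasSum (fun j => lam j * ψ j x * ψ j y) (g x y))
include hlam hlam_sum hψ hon hM

theorem integral_mul_eigenfunction_of_mercer (j : ℕ) :
    ∫ z : E × E, g z.1 z.2 * (ψ j z.1 * ψ j z.2) ∂(μ.prod μ) = lam j := by
  have hsum := hasSum_integral_of_hasSum_mul (ν := μ.prod μ) (B := 1)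
    (F := fun l z => ψ l z.1 * ψ l z.2 * (ψ j z.1 * ψ j z.2)) hlam hlam_sum
    (fun l => ((hψ l).integrable_mul (hψ j)).mul_prod ((hψ l).integrable_mul (hψ j))
      |>.congr (ae_of_all _ fun z => by simp only [Pi.mul_apply]; ring))
    (fun l => integral_abs_mul_prod_le_one (hψ l) (by simp [hon]) (hψ j) (by simp [hon]))
    (fun z => by simpa only [mul_assoc] using (hM z.1 z.2).mul_right (ψ j z.1 * ψ j z.2))
  refine hsum.unique ?_
  convert hasSum_ite_eq j (lam j) using 1
  funext l
  have hprod : ∫ z : E × E, ψ l z.1 * ψ l z.2 * (ψ j z.1 * ψ j z.2) ∂(μ.prod μ)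
      = (∫ x, ψ l x * ψ j x ∂μ) * ∫ x, ψ l x * ψ j x ∂μ := by
    rw [← integral_prod_mul]
    congr 1
    funext z
    ring
  rw [hprod, hon]
  split_ifs with h <;> simp [h]

theorem hasSum_sq_integral_of_mercer (hg : Measurable (uncurry g)) {C : ℝ}
    (hgC : ∀ x y, |g x y| ≤ C) :
    HasSum (fun j => lam j ^ 2) (∫ z : E × E, g z.1 z.2 ^ 2 ∂(μ.prod μ)) := by
  have hψψ : ∀ j, Integrable (fun z : E × E => ψ j z.1 * ψ j z.2) (μ.prod μ) := fun j =>
    ((hψ j).integrable one_le_two).mul_prod ((hψ j).integrable one_le_two)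
  have hbound : ∀ j, ∫ z : E × E, |ψ j z.1 * ψ j z.2 * g z.1 z.2| ∂(μ.prod μ) ≤ |C| := by
    intro j
    have hψ1 : ∫ z : E × E, |ψ j z.1 * ψ j z.2| ∂(μ.prod μ) ≤ 1 := by
      simpa using integral_abs_mul_prod_le_one (hψ j) (by simp [hon]) (memLp_const 1)
        (by simp)
    calc ∫ z : E × E, |ψ j z.1 * ψ j z.2 * g z.1 z.2| ∂(μ.prod μ)
        ≤ ∫ z : E × E, |C| * |ψ j z.1 * ψ j z.2| ∂(μ.prod μ) :=
          integral_mono_of_nonneg (ae_of_all _ fun _ => abs_nonneg _)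
            ((hψψ j).abs.const_mul _) (ae_of_all _ fun z => by
              simp only [abs_mul (ψ j z.1 * ψ j z.2), mul_comm |C|]
              exact mul_le_mul_of_nonneg_left ((hgC _ _).trans (le_abs_self C))
                (abs_nonneg _))
      _ ≤ |C| := by
          rw [integral_const_mul]
          exact mul_le_of_le_one_right (abs_nonneg C) hψ1
  have hsum := hasSum_integral_of_hasSum_mul (ν := μ.prod μ)
    (F := fun j z => ψ j z.1 * ψ j z.2 * g z.1 z.2) hlam hlam_sum
    (fun j => (hψψ j).mul_bdd hg.aestronglyMeasurable (ae_of_all _ fun z => hgC z.1 z.2))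
    hbound (fun z => by
      simpa only [mul_assoc, ← sq] using (hM z.1 z.2).mul_right (g z.1 z.2))
  convert hsum using 2 with j
  rw [← integral_mul_eigenfunction_of_mercer hlam hlam_sum hψ hon hM j, sq]
  congr 1
  exact integral_congr_ae (ae_of_all _ fun z => by simp only; ring)

end Mercer

section CenteredKernel

variable {E : Type*} [MeasurableSpace E]

noncomputable def centeredKernel (μ : Measure E) (k : E → E → ℝ) (x y : E) : ℝ :=
  k x y - ∫ z, k x z ∂μ - ∫ z, k y z ∂μ + ∫ z, ∫ w, k z w ∂μ ∂μ

variable {μ : Measure E} {k : E → E → ℝ}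

theorem centeredKernel_withDensity_ofReal {p : E → ℝ} (hp : Measurable p)
    (hp0 : ∀ x, 0 ≤ p x) (x y : E) :
    centeredKernel (μ.withDensity fun x => ENNReal.ofReal (p x)) k x y
      = k x y - ∫ z, k x z * p z ∂μ - ∫ z, k y z * p z ∂μ
        + ∫ z, ∫ w, k z w * p z * p w ∂μ ∂μ := by
  simp only [centeredKernel, integral_withDensity_ofReal hp hp0]
  congr 1
  refine integral_congr_ae (ae_of_all _ fun z => ?_)
  simp only [← integral_mul_const]
  exact integral_congr_ae (ae_of_all _ fun w => mul_right_comm _ _ _)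

theorem centeredKernel_comm (hk : ∀ x y, k x y = k y x) (x y : E) :
    centeredKernel μ k x y = centeredKernel μ k y x := by
  simp only [centeredKernel, hk x y]
  ring

theorem abs_centeredKernel_le [IsProbabilityMeasure μ] {C : ℝ} (hk : ∀ x y, |k x y| ≤ C)
    (x y : E) : |centeredKernel μ k x y| ≤ 4 * C := by
  have hmean : ∀ x, |∫ z, k x z ∂μ| ≤ C := fun x => by
    simpa using norm_integral_le_of_norm_le_const (μ := μ)
      (ae_of_all _ fun z => (Real.norm_eq_abs _).trans_le (hk x z))
  have hmean₂ : |∫ z, ∫ w, k z w ∂μ ∂μ| ≤ C := by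
    simpa using norm_integral_le_of_norm_le_const (μ := μ)
      (ae_of_all _ fun z => (Real.norm_eq_abs _).trans_le (hmean z))
  have h₁ := abs_le.mp (hk x y)
  have h₂ := abs_le.mp (hmean x)
  have h₃ := abs_le.mp (hmean y)
  have h₄ := abs_le.mp hmean₂
  exact abs_le.mpr ⟨by unfold centeredKernel; linarith, by unfold centeredKernel; linarith⟩

theorem measurable_integral_right [SFinite μ] (hk : Measurable (uncurry k)) :
    Measurable fun x => ∫ z, k x z ∂μ :=
  hk.stronglyMeasurable.integral_prod_right.measurable

theorem measurable_centeredKernel [SFinite μ] (hk : Measurable (uncurry k)) :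
    Measurable (uncurry (centeredKernel μ k)) := by
  have hm := measurable_integral_right (μ := μ) hk
  exact ((hk.sub (hm.comp measurable_fst)).sub (hm.comp measurable_snd)).add measurable_const

theorem integral_centeredKernel_right [IsProbabilityMeasure μ] (hk : Measurable (uncurry k))
    {C : ℝ} (hkC : ∀ x y, |k x y| ≤ C) (x : E) : ∫ y, centeredKernel μ k x y ∂μ = 0 := by
  have hint : Integrable (fun y => k x y) μ :=
    Integrable.of_bound (hk.comp measurable_prodMk_left).aestronglyMeasurable C
      (ae_of_all _ fun z => (Real.norm_eq_abs _).trans_le (hkC x z))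
  have hint₂ : Integrable (fun y => ∫ z, k y z ∂μ) μ :=
    Integrable.of_bound (measurable_integral_right hk).aestronglyMeasurable C
      (ae_of_all _ fun y => by
        simpa using norm_integral_le_of_norm_le_const (μ := μ)
          (ae_of_all _ fun z => (Real.norm_eq_abs _).trans_le (hkC y z)))
  simp only [centeredKernel]
  rw [integral_add, integral_sub, integral_sub hint (integrable_const _)]
  · simp
  · exact hint.sub (integrable_const _)
  · exact hint₂
  · exact (hint.sub (integrable_const _)).sub hint₂
  · exact integrable_const _

theorem sum_mul_centeredKernel {S : Type*} [Fintype S] {c : S → S → ℝ}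
    (hrow : ∀ s, ∑ t, c s t = 0) (hcol : ∀ t, ∑ s, c s t = 0) (x : S → E) :
    ∑ s, ∑ t, c s t * centeredKernel μ k (x s) (x t) = ∑ s, ∑ t, c s t * k (x s) (x t) := by
  have hcol' : ∑ s, ∑ t, c s t * ∫ z, k (x t) z ∂μ = 0 := by
    rw [Finset.sum_comm]
    simp [← Finset.sum_mul, hcol]
  simp only [centeredKernel, mul_add, mul_sub, Finset.sum_add_distrib, Finset.sum_sub_distrib,
    hcol']
  simp [← Finset.sum_mul, hrow]

end CenteredKernel

section DegenerateKernel

variable {E Ω : Type*} [MeasurableSpace E] [MeasurableSpace Ω] {P : Measure Ω}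
  [IsProbabilityMeasure P] {μ : Measure E}

theorem integral_comp_eq_zero_of_indepFun [IsProbabilityMeasure μ] {β : Type*}
    [MeasurableSpace β] {X : Ω → E} {V : Ω → β} (hX : Measurable X) (hV : Measurable V)
    (hXV : IndepFun X V P) (hlaw : P.map X = μ) {H : E × β → ℝ} (hH : Measurable H) {C : ℝ}
    (hHC : ∀ z, |H z| ≤ C) (hH0 : ∀ v, ∫ x, H (x, v) ∂μ = 0) :
    ∫ ω, H (X ω, V ω) ∂P = 0 := by
  have := Measure.isProbabilityMeasure_map (μ := P) hV.aemeasurable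
  have hmap : P.map (fun ω => (X ω, V ω)) = μ.prod (P.map V) := by
    rw [(indepFun_iff_map_prod_eq_prod_map_map hX.aemeasurable hV.aemeasurable).mp hXV, hlaw]
  rw [← integral_map (f := H) (hX.prodMk hV).aemeasurable hH.aestronglyMeasurable, hmap,
    integral_prod_symm _ (Integrable.of_bound hH.aestronglyMeasurable C
      (ae_of_all _ fun z => (Real.norm_eq_abs _).trans_le (hHC z)))]
  simp [hH0]

variable {S : Type*} {Z : S → Ω → E} {g : E → E → ℝ}
  (hZ : ∀ s, Measurable (Z s)) (hlaw : ∀ s, P.map (Z s) = μ) (hind : iIndepFun Z P)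
  (hg : Measurable (uncurry g)) {C : ℝ} (hgC : ∀ x y, |g x y| ≤ C)

include hZ hlaw hind in
theorem integral_comp_pair {s t : S} (hst : s ≠ t) {F : E × E → ℝ} (hF : Measurable F) :
    ∫ ω, F (Z s ω, Z t ω) ∂P = ∫ z, F z ∂(μ.prod μ) := by
  have hmap := (indepFun_iff_map_prod_eq_prod_map_map (hZ s).aemeasurable
    (hZ t).aemeasurable).mp (hind.indepFun hst)
  rw [hlaw, hlaw] at hmap
  rw [← hmap, integral_map ((hZ s).prodMk (hZ t)).aemeasurable hF.aestronglyMeasurable]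

include hZ hg hgC in
theorem memLp_comp_pair (p : ENNReal) (s t : S) :
    MemLp (fun ω => g (Z s ω) (Z t ω)) p P :=
  MemLp.of_bound (hg.comp ((hZ s).prodMk (hZ t))).aestronglyMeasurable C
    (ae_of_all _ fun _ => (Real.norm_eq_abs _).trans_le (hgC _ _))

include hZ hlaw hind hg hgC in
theorem integral_mul_eq_zero_of_degenerate [IsProbabilityMeasure μ]
    (hdeg : ∀ x, ∫ y, g x y ∂μ = 0) {s t u v : S} (hst : s ≠ t) (hut : u ≠ t) (hvt : v ≠ t)
    {f : E → E → ℝ} (hf : Measurable (uncurry f)) {D : ℝ} (hfD : ∀ x y, |f x y| ≤ D) :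
    ∫ ω, g (Z s ω) (Z t ω) * f (Z u ω) (Z v ω) ∂P = 0 := by
  classical
  set T : Finset S := {s, u, v}
  have hindep : IndepFun (Z t) (fun ω (r : T) => Z r ω) P := by
    have h := hind.indepFun_finset {t} T (by simp [T, hst.symm, hut.symm, hvt.symm]) hZ
    exact h.comp (measurable_pi_apply (⟨t, Finset.mem_singleton_self t⟩ : ({t} : Finset S)))
      measurable_id
  refine integral_comp_eq_zero_of_indepFun (hZ t)
    (measurable_pi_lambda (fun ω (r : T) => Z r ω) fun r => hZ r) hindep (hlaw t)
    (H := fun q => g (q.2 ⟨s, by simp [T]⟩) q.1 * f (q.2 ⟨u, by simp [T]⟩) (q.2 ⟨v, by simp [T]⟩))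
    ?_ (C := |C| * |D|) (fun q => ?_) (fun w => ?_)
  · exact (hg.comp (Measurable.prodMk (by fun_prop) measurable_fst)).mul
      (hf.comp (Measurable.prodMk (by fun_prop) (by fun_prop)))
  · rw [abs_mul]
    exact mul_le_mul ((hgC _ _).trans (le_abs_self C)) ((hfD _ _).trans (le_abs_self D))
      (abs_nonneg _) (abs_nonneg C)
  · simp [integral_mul_const, hdeg]

include hZ hlaw hind hg hgC in
theorem covariance_comp_pair_of_degenerate [IsProbabilityMeasure μ] [DecidableEq S]
    (hgs : ∀ x y, g x y = g y x) (hdeg : ∀ x, ∫ y, g x y ∂μ = 0) (s t u v : S) :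
    cov[fun ω => g (Z s ω) (Z t ω), fun ω => g (Z u ω) (Z v ω); P] =
      if s = t then (if u = s ∧ v = s then Var[fun x => g x x; μ] else 0)
      else (if u = s ∧ v = t then ∫ z, g z.1 z.2 ^ 2 ∂(μ.prod μ) else 0)
        + (if u = t ∧ v = s then ∫ z, g z.1 z.2 ^ 2 ∂(μ.prod μ) else 0) := by
  have hG := memLp_comp_pair (P := P) hZ hg hgC 2
  have hoff : ∀ {s t u v : S}, s ≠ t → u ≠ t → v ≠ t →
      ∫ ω, g (Z s ω) (Z t ω) * g (Z u ω) (Z v ω) ∂P = 0 := fun hst hut hvt =>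
    integral_mul_eq_zero_of_degenerate hZ hlaw hind hg hgC hdeg hst hut hvt hg hgC
  have hmean : ∀ {s t : S}, s ≠ t → ∫ ω, g (Z s ω) (Z t ω) ∂P = 0 := fun {s t} hst => by
    simpa using integral_mul_eq_zero_of_degenerate hZ hlaw hind hg hgC hdeg hst hst hst
      (f := fun _ _ => (1 : ℝ)) measurable_const (D := 1) (by simp)
  have hdiag : Measurable fun x => g x x := hg.comp (measurable_id.prodMk measurable_id)
  rcases eq_or_ne s t with rfl | hst
  · rcases eq_or_ne u v with rfl | huv
    · rcases eq_or_ne u s with rfl | hus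
      · simp only [and_self, if_true]
        rw [covariance_self (hG u u).aemeasurable, ← hlaw u,
          variance_map (by rw [hlaw u]; exact hdiag.aemeasurable) (hZ u).aemeasurable]
        rfl
      · have hind' : IndepFun (fun ω => g (Z s ω) (Z s ω)) (fun ω => g (Z u ω) (Z u ω)) P :=
          (hind.indepFun (Ne.symm hus)).comp hdiag hdiag
        simp [hind'.covariance_eq_zero (hG s s) (hG u u), hus]
    · have hcross : ∫ ω, g (Z s ω) (Z s ω) * g (Z u ω) (Z v ω) ∂P = 0 := by
        simp_rw [mul_comm (g (Z s _) (Z s _))]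
        rcases eq_or_ne v s with rfl | hvs
        · simp_rw [hgs (Z u _) (Z v _)]
          exact hoff (Ne.symm huv) (Ne.symm huv) (Ne.symm huv)
        · exact hoff huv (Ne.symm hvs) (Ne.symm hvs)
      rw [covariance_eq_sub (hG s s) (hG u v), if_pos rfl,
        if_neg fun h => huv (h.1.trans h.2.symm)]
      simp [hcross, hmean huv]
  · rw [covariance_eq_sub (hG s t) (hG u v), hmean hst, zero_mul, sub_zero, if_neg hst]
    simp only [Pi.mul_apply]
    have hsq : ∫ ω, g (Z s ω) (Z t ω) * g (Z s ω) (Z t ω) ∂P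
        = ∫ z, g z.1 z.2 ^ 2 ∂(μ.prod μ) := by
      simp_rw [← sq]
      exact integral_comp_pair hZ hlaw hind hst (F := fun z => g z.1 z.2 ^ 2) (hg.pow_const 2)
    by_cases h₁ : u = s ∧ v = t
    · obtain ⟨rfl, rfl⟩ := h₁
      simp [hsq, Ne.symm hst]
    by_cases h₂ : u = t ∧ v = s
    · obtain ⟨rfl, rfl⟩ := h₂
      simp_rw [hgs (Z u _) (Z v _)]
      simp [hsq, hst]
    rw [if_neg h₁, if_neg h₂, add_zero]
    -- `{u, v}` misses `t` or `s`; in the second case swap the arguments of `g`.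
    by_cases hut : u ≠ t ∧ v ≠ t
    · exact hoff hst hut.1 hut.2
    · have hus : u ≠ s ∧ v ≠ s := by grind
      simp_rw [hgs (Z s _) (Z t _)]
      exact hoff (Ne.symm hst) hus.1 hus.2

include hZ hlaw hind hg hgC in
theorem variance_sum_sum_of_degenerate [IsProbabilityMeasure μ] [Fintype S] [DecidableEq S]
    (hgs : ∀ x y, g x y = g y x) (hdeg : ∀ x, ∫ y, g x y ∂μ = 0) {c : S → S → ℝ}
    (hc : ∀ s t, c s t = c t s) :
    Var[fun ω => ∑ s, ∑ t, c s t * g (Z s ω) (Z t ω); P] =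
      Var[fun x => g x x; μ] * ∑ s, c s s ^ 2
        + 2 * (∫ z, g z.1 z.2 ^ 2 ∂(μ.prod μ)) * ∑ s, ∑ t, if s = t then 0 else c s t ^ 2 := by
  have hW : (fun ω => ∑ s, ∑ t, c s t * g (Z s ω) (Z t ω))
      = fun ω => ∑ p : S × S, c p.1 p.2 * g (Z p.1 ω) (Z p.2 ω) := by
    simp only [Fintype.sum_prod_type]
  rw [hW, variance_fun_sum (X := fun (p : S × S) ω => c p.1 p.2 * g (Z p.1 ω) (Z p.2 ω))
    fun p => (memLp_comp_pair hZ hg hgC 2 p.1 p.2).const_mul _]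
  simp only [covariance_const_mul_left, covariance_const_mul_right,
    covariance_comp_pair_of_degenerate hZ hlaw hind hg hgC hgs hdeg, Fintype.sum_prod_type]
  set A := ∫ z, g z.1 z.2 ^ 2 ∂(μ.prod μ)
  have hinner : ∀ s t, (∑ u, ∑ v, c u v * (c s t * (if s = t then
        (if u = s ∧ v = s then Var[fun x => g x x; μ] else 0)
        else (if u = s ∧ v = t then A else 0) + (if u = t ∧ v = s then A else 0))))
      = Var[fun x => g x x; μ] * (if s = t then c s s ^ 2 else 0)
        + 2 * A * (if s = t then 0 else c s t ^ 2) := by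
    intro s t
    split_ifs with hst
    · subst hst
      simp only [ite_and, mul_ite, mul_zero, Finset.sum_ite_irrel, Finset.sum_ite_eq',
        Finset.mem_univ, ↓reduceIte, Finset.sum_const_zero, add_zero]
      ring
    · simp only [ite_and, mul_add, mul_ite, mul_zero, Finset.sum_add_distrib,
        Finset.sum_ite_irrel, Finset.sum_ite_eq', Finset.mem_univ, ↓reduceIte,
        Finset.sum_const_zero, hc t s, zero_add]
      ring
  simp only [hinner, Finset.sum_add_distrib, ← Finset.mul_sum, Finset.sum_ite_eq,
    Finset.mem_univ, if_true]

include hZ hlaw hind hg hgC in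
theorem variance_sum_sum_mul_mul_le_of_degenerate [IsProbabilityMeasure μ] [Fintype S]
    (hgs : ∀ x y, g x y = g y x) (hdeg : ∀ x, ∫ y, g x y ∂μ = 0) (a : S → ℝ) :
    Var[fun ω => ∑ s, ∑ t, a s * a t * g (Z s ω) (Z t ω); P] ≤
      C ^ 2 * ∑ s, a s ^ 4 + 2 * (∫ z, g z.1 z.2 ^ 2 ∂(μ.prod μ)) * (∑ s, a s ^ 2) ^ 2 := by
  classical
  rw [variance_sum_sum_of_degenerate hZ hlaw hind hg hgC hgs hdeg (c := fun s t => a s * a t)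
    fun _ _ => mul_comm _ _]
  have hvar : Var[fun x => g x x; μ] ≤ C ^ 2 := by
    have h := variance_le_sq_of_bounded (μ := μ) (a := -C) (b := C)
      (ae_of_all _ fun x => abs_le.mp (hgC x x))
      (hg.comp (measurable_id.prodMk measurable_id)).aemeasurable
    linarith [show ((C - -C) / 2) ^ 2 = C ^ 2 by ring]
  have hoff : (∑ s, ∑ t, if s = t then 0 else (a s * a t) ^ 2) ≤ (∑ s, a s ^ 2) ^ 2 := by
    rw [sq, Finset.sum_mul_sum]
    refine Finset.sum_le_sum fun s _ => Finset.sum_le_sum fun t _ => ?_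
    split_ifs
    · positivity
    · exact (mul_pow _ _ _).le
  have hdiag : ∑ s, (a s * a s) ^ 2 = ∑ s, a s ^ 4 :=
    Finset.sum_congr rfl fun s _ => by ring
  have hA : 0 ≤ ∫ z, g z.1 z.2 ^ 2 ∂(μ.prod μ) := integral_nonneg fun _ => sq_nonneg _
  rw [hdiag]
  gcongr

end DegenerateKernel

noncomputable def mmdCoeff (n₁ n₂ : ℕ) : Fin n₁ ⊕ Fin n₂ → ℝ :=
  Sum.elim (fun _ => (n₁ : ℝ)⁻¹) (fun _ => -(n₂ : ℝ)⁻¹)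

section MMDCoeff

variable {n₁ n₂ : ℕ}

theorem sum_mmdCoeff (h₁ : n₁ ≠ 0) (h₂ : n₂ ≠ 0) : ∑ s, mmdCoeff n₁ n₂ s = 0 := by
  simp [mmdCoeff, h₁, h₂]

theorem sum_mmdCoeff_sq (h₁ : n₁ ≠ 0) (h₂ : n₂ ≠ 0) :
    ∑ s, mmdCoeff n₁ n₂ s ^ 2 = (n₁ : ℝ)⁻¹ + (n₂ : ℝ)⁻¹ := by
  simp only [mmdCoeff, Fintype.sum_sum_type, Sum.elim_inl, Sum.elim_inr, Finset.sum_const,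
    Finset.card_univ, Fintype.card_fin, nsmul_eq_mul, even_two, Even.neg_pow]
  field_simp

theorem sum_mmdCoeff_pow_four (h₁ : n₁ ≠ 0) (h₂ : n₂ ≠ 0) :
    ∑ s, mmdCoeff n₁ n₂ s ^ 4 = (n₁ : ℝ)⁻¹ ^ 3 + (n₂ : ℝ)⁻¹ ^ 3 := by
  simp only [mmdCoeff, Fintype.sum_sum_type, Sum.elim_inl, Sum.elim_inr, Finset.sum_const,
    Finset.card_univ, Fintype.card_fin, nsmul_eq_mul]
  field_simp

theorem mmd_eq_sum_mmdCoeff {E : Type*} {k : E → E → ℝ} (hk : ∀ x y, k x y = k y x)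
    (z : Fin n₁ ⊕ Fin n₂ → E) :
    (∑ i, ∑ i', k (z (.inl i)) (z (.inl i'))) / (n₁ : ℝ) ^ 2
      + (∑ j, ∑ j', k (z (.inr j)) (z (.inr j'))) / (n₂ : ℝ) ^ 2
      - 2 * (∑ i, ∑ j, k (z (.inl i)) (z (.inr j))) / ((n₁ : ℝ) * n₂)
      = ∑ s, ∑ t, mmdCoeff n₁ n₂ s * mmdCoeff n₁ n₂ t * k (z s) (z t) := by
  have hyx : ∑ j, ∑ i, k (z (.inr j)) (z (.inl i)) = ∑ i, ∑ j, k (z (.inl i)) (z (.inr j)) := by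
    rw [Finset.sum_comm]
    simp_rw [hk (z (.inr _))]
  simp only [Fintype.sum_sum_type, mmdCoeff, Sum.elim_inl, Sum.elim_inr, neg_mul, mul_neg,
    Finset.sum_add_distrib, Finset.sum_neg_distrib, ← Finset.mul_sum, hyx]
  ring

theorem sum_mmdCoeff_mul_centeredKernel (h₁ : n₁ ≠ 0) (h₂ : n₂ ≠ 0) {E : Type*}
    [MeasurableSpace E] (μ : Measure E) (k : E → E → ℝ) (z : Fin n₁ ⊕ Fin n₂ → E) :
    ∑ s, ∑ t, mmdCoeff n₁ n₂ s * mmdCoeff n₁ n₂ t * centeredKernel μ k (z s) (z t)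
      = ∑ s, ∑ t, mmdCoeff n₁ n₂ s * mmdCoeff n₁ n₂ t * k (z s) (z t) :=
  sum_mul_centeredKernel
    (fun s => by rw [← Finset.mul_sum, sum_mmdCoeff h₁ h₂, mul_zero])
    (fun t => by rw [← Finset.sum_mul, sum_mmdCoeff h₁ h₂, zero_mul]) z

end MMDCoeff

theorem mmd_variance_bounds_of_le {V A n₁ n₂ n : ℝ} (h₁ : 0 < n₁) (h₂ : 0 < n₂)
    (hn : n = n₁ + n₂) (hA : A ≤ 16)
    (hV : V ≤ n ^ 2 * (4 ^ 2 * (n₁⁻¹ ^ 3 + n₂⁻¹ ^ 3) + 2 * A * (n₁⁻¹ + n₂⁻¹) ^ 2)) :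
    V ≤ 2 / (n₁ / n * (n₂ / n)) ^ 2 * A + 16 / n * ((n₁ / n)⁻¹ ^ 3 + (n₂ / n)⁻¹ ^ 3)
    ∧ (16 / 0.1 * ((n₁ / n)⁻¹ ^ 3 + 4 * (n₂ / n)⁻¹ ^ 3) < n →
      V ≤ 32 / (n₁ / n * (n₂ / n)) ^ 2 + 0.1) := by
  have hbound :
      V ≤ 2 / (n₁ / n * (n₂ / n)) ^ 2 * A + 16 / n * ((n₁ / n)⁻¹ ^ 3 + (n₂ / n)⁻¹ ^ 3) := by
    refine hV.trans_eq ?_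
    subst hn
    field_simp
    ring
  refine ⟨hbound, fun hlarge => hbound.trans ?_⟩
  have hn0 : 0 < n := by rw [hn]; positivity
  have hfirst : 2 / (n₁ / n * (n₂ / n)) ^ 2 * A ≤ 32 / (n₁ / n * (n₂ / n)) ^ 2 := by
    calc _ ≤ 2 / (n₁ / n * (n₂ / n)) ^ 2 * 16 := by gcongr
      _ = _ := by ring
  have hsecond : 16 / n * ((n₁ / n)⁻¹ ^ 3 + (n₂ / n)⁻¹ ^ 3) ≤ 0.1 := by
    have : 0 ≤ (n₂ / n)⁻¹ ^ 3 := by positivity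
    rw [div_mul_eq_mul_div, div_le_iff₀ hn0]
    linarith
  linarith

theorem null_variance_scaled_mmd_general
    {d : ℕ}
    (p : EuclideanSpace ℝ (Fin d) → ℝ)
    (hp_cont : Continuous p) (hp_nonneg : ∀ x, 0 ≤ p x)
    (hp_int : ∫ x, p x = 1)
    -- the kernel `k`, Assumption A1
    (k : EuclideanSpace ℝ (Fin d) → EuclideanSpace ℝ (Fin d) → ℝ)
    (hk_cont : Continuous (Function.uncurry k))
    (hk_symm : ∀ x y, k x y = k y x)
    (hk_bdd : ∀ x y, |k x y| ≤ 1)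
    -- the centered kernel `k̃` and its Mercer expansion in `L²(p(x)dx)`
    (kt : EuclideanSpace ℝ (Fin d) → EuclideanSpace ℝ (Fin d) → ℝ)
    (hkt : ∀ x y, kt x y = k x y - (∫ z, k x z * p z) - (∫ z, k y z * p z)
      + ∫ z, ∫ w, k z w * p z * p w)
    (lam : ℕ → ℝ) (hlam_pos : ∀ j, 0 < lam j) (hlam_sum : Summable lam)
    (ψ : ℕ → EuclideanSpace ℝ (Fin d) → ℝ)
    (hψ_cont : ∀ j, Continuous (ψ j))
    (hψ_on : ∀ j l, (∫ x, ψ j x * ψ l x * p x) = if j = l then (1 : ℝ) else 0)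
    (hMercer : ∀ x y, HasSum (fun j => lam j * ψ j x * ψ j y) (kt x y))
    -- the samples: `X` and `Y` independent, each i.i.d. from `p`
    (n₁ n₂ n : ℕ) (hn : n = n₁ + n₂) (hn₁_pos : 0 < n₁) (hn₂_pos : 0 < n₂)
    {Ω' : Type*} [MeasurableSpace Ω'] (P : Measure Ω') [IsProbabilityMeasure P]
    (X : Fin n₁ → Ω' → EuclideanSpace ℝ (Fin d))
    (Y : Fin n₂ → Ω' → EuclideanSpace ℝ (Fin d))
    (hX_meas : ∀ i, Measurable (X i)) (hY_meas : ∀ j, Measurable (Y j))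
    (hX_law : ∀ i, Measure.map (X i) P
      = volume.withDensity (fun x => ENNReal.ofReal (p x)))
    (hY_law : ∀ j, Measure.map (Y j) P
      = volume.withDensity (fun x => ENNReal.ofReal (p x)))
    (hindep : iIndepFun (Sum.elim X Y) P)
    -- the empirical MMD statistic
    (Tn : Ω' → ℝ)
    (hTn : ∀ ω, Tn ω =
      (∑ i, ∑ i', k (X i ω) (X i' ω)) / (n₁ : ℝ) ^ 2
      + (∑ j, ∑ j', k (Y j ω) (Y j' ω)) / (n₂ : ℝ) ^ 2
      - 2 * (∑ i, ∑ j, k (X i ω) (Y j ω)) / ((n₁ : ℝ) * (n₂ : ℝ))) :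
    variance (fun ω => (n : ℝ) * Tn ω) P
      ≤ (2 / (((n₁ : ℝ) / (n : ℝ)) * ((n₂ : ℝ) / (n : ℝ))) ^ 2) * (∑' j, lam j ^ 2)
        + (16 / (n : ℝ)) * ((((n₁ : ℝ) / (n : ℝ))⁻¹) ^ 3 + (((n₂ : ℝ) / (n : ℝ))⁻¹) ^ 3)
    ∧ ((16 / 0.1) * ((((n₁ : ℝ) / (n : ℝ))⁻¹) ^ 3 + 4 * (((n₂ : ℝ) / (n : ℝ))⁻¹) ^ 3) < (n : ℝ) →
      variance (fun ω => (n : ℝ) * Tn ω) P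
        ≤ 32 / (((n₁ : ℝ) / (n : ℝ)) * ((n₂ : ℝ) / (n : ℝ))) ^ 2 + 0.1) := by
  set μ₀ := volume.withDensity fun x => ENNReal.ofReal (p x)
  have : IsProbabilityMeasure μ₀ := isProbabilityMeasure_withDensity_ofReal hp_nonneg hp_int
  have hμ₀ : ∀ f : EuclideanSpace ℝ (Fin d) → ℝ, ∫ x, f x ∂μ₀ = ∫ x, f x * p x :=
    integral_withDensity_ofReal hp_cont.measurable hp_nonneg
  have hk : Measurable (uncurry k) := hk_cont.measurable
  obtain rfl : kt = centeredKernel μ₀ k := funext₂ fun x y => by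
    rw [hkt, centeredKernel_withDensity_ofReal hp_cont.measurable hp_nonneg]
  have hon : ∀ j l, ∫ x, ψ j x * ψ l x ∂μ₀ = if j = l then 1 else 0 := by
    simpa only [hμ₀] using hψ_on
  have hψ : ∀ j, MemLp (ψ j) 2 μ₀ := fun j =>
    memLp_two_of_integral_mul_self_ne_zero (hψ_cont j).aestronglyMeasurable (by simp [hon])
  have hkt_le : ∀ x y, |centeredKernel μ₀ k x y| ≤ 4 := by
    simpa using abs_centeredKernel_le (μ := μ₀) hk_bdd
  have hA := hasSum_sq_integral_of_mercer (fun j => (hlam_pos j).le) hlam_sum hψ hon hMercer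
    (measurable_centeredKernel hk) hkt_le
  have hvar := variance_sum_sum_mul_mul_le_of_degenerate (Sum.forall.2 ⟨hX_meas, hY_meas⟩)
    (Sum.forall.2 ⟨hX_law, hY_law⟩) hindep (measurable_centeredKernel hk) hkt_le
    (centeredKernel_comm hk_symm) (integral_centeredKernel_right hk hk_bdd) (mmdCoeff n₁ n₂)
  rw [sum_mmdCoeff_pow_four hn₁_pos.ne' hn₂_pos.ne', sum_mmdCoeff_sq hn₁_pos.ne' hn₂_pos.ne',
    ← hA.tsum_eq] at hvar
  have hTn' : Tn = fun ω => ∑ s, ∑ t, mmdCoeff n₁ n₂ s * mmdCoeff n₁ n₂ t *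
      centeredKernel μ₀ k (Sum.elim X Y s ω) (Sum.elim X Y t ω) := funext fun ω =>
    (hTn ω).trans <| (mmd_eq_sum_mmdCoeff hk_symm fun s => Sum.elim X Y s ω).trans
      (sum_mmdCoeff_mul_centeredKernel hn₁_pos.ne' hn₂_pos.ne' μ₀ k _).symm
  have hA_le : ∑' j, lam j ^ 2 ≤ 16 := by
    rw [hA.tsum_eq, show (16 : ℝ) = 4 ^ 2 by norm_num]
    exact integral_sq_le_of_abs_le fun z => hkt_le z.1 z.2
  refine mmd_variance_bounds_of_le (Nat.cast_pos.mpr hn₁_pos) (Nat.cast_pos.mpr hn₂_pos)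
    (by exact_mod_cast hn) hA_le ?_
  rw [hTn', variance_const_mul]
  exact mul_le_mul_of_nonneg_left hvar (sq_nonneg _)

/-- Under the null hypothesis (both `X` and `Y` i.i.d. from `p`),
`Var(n T_n) ≤ (2/(ρ₁ρ₂)²) Σ_k λ̃_k² + (16/n)(ρ₁⁻³ + ρ₂⁻³)`, with `ρ₁ = n₁/n`,
`ρ₂ = n₂/n`; in particular, if `n > (16/0.1)(ρ₁⁻³ + 4ρ₂⁻³)`, then
`Var(n T_n) ≤ 32/(ρ₁ρ₂)² + 0.1`. -/
theorem null_variance_scaled_mmd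
    {d : ℕ}
    (Ω : Set (EuclideanSpace ℝ (Fin d))) (hΩ : IsCompact Ω)
    (p : EuclideanSpace ℝ (Fin d) → ℝ)
    (hp_cont : Continuous p) (hp_nonneg : ∀ x, 0 ≤ p x)
    (hp_supp : ∀ x, x ∉ Ω → p x = 0) (hp_int : ∫ x, p x = 1)
    -- the kernel `k`, Assumption A1
    (k : EuclideanSpace ℝ (Fin d) → EuclideanSpace ℝ (Fin d) → ℝ)
    (hk_cont : Continuous (Function.uncurry k))
    (hk_symm : ∀ x y, k x y = k y x)
    (hk_psd : ∀ (m : ℕ) (x : Fin m → EuclideanSpace ℝ (Fin d)) (c : Fin m → ℝ),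
      0 ≤ ∑ i, ∑ j, c i * c j * k (x i) (x j))
    (hk_diag_nonneg : ∀ x, 0 ≤ k x x) (hk_diag_le : ∀ x, k x x ≤ 1)
    (hk_bdd : ∀ x y, |k x y| ≤ 1)
    -- the centered kernel `k̃` and its Mercer expansion in `L²(p(x)dx)`
    (kt : EuclideanSpace ℝ (Fin d) → EuclideanSpace ℝ (Fin d) → ℝ)
    (hkt : ∀ x y, kt x y = k x y - (∫ z, k x z * p z) - (∫ z, k y z * p z)
      + ∫ z, ∫ w, k z w * p z * p w)
    (lam : ℕ → ℝ) (hlam_pos : ∀ j, 0 < lam j) (hlam_sum : Summable lam)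
    (ψ : ℕ → EuclideanSpace ℝ (Fin d) → ℝ)
    (hψ_cont : ∀ j, Continuous (ψ j))
    (hψ_on : ∀ j l, (∫ x, ψ j x * ψ l x * p x) = if j = l then (1 : ℝ) else 0)
    (hψ_mean : ∀ j, (∫ x, ψ j x * p x) = 0)
    (hMercer : ∀ x y, HasSum (fun j => lam j * ψ j x * ψ j y) (kt x y))
    -- the samples: `X` and `Y` independent, each i.i.d. from `p`
    (n₁ n₂ n : ℕ) (hn : n = n₁ + n₂) (hn₁_pos : 0 < n₁) (hn₂_pos : 0 < n₂)
    {Ω' : Type*} [MeasurableSpace Ω'] (P : Measure Ω') [IsProbabilityMeasure P]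
    (X : Fin n₁ → Ω' → EuclideanSpace ℝ (Fin d))
    (Y : Fin n₂ → Ω' → EuclideanSpace ℝ (Fin d))
    (hX_meas : ∀ i, Measurable (X i)) (hY_meas : ∀ j, Measurable (Y j))
    (hX_law : ∀ i, Measure.map (X i) P
      = volume.withDensity (fun x => ENNReal.ofReal (p x)))
    (hY_law : ∀ j, Measure.map (Y j) P
      = volume.withDensity (fun x => ENNReal.ofReal (p x)))
    (hindep : iIndepFun (Sum.elim X Y) P)
    -- the empirical MMD statistic
    (Tn : Ω' → ℝ)
    (hTn : ∀ ω, Tn ω =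
      (∑ i, ∑ i', k (X i ω) (X i' ω)) / (n₁ : ℝ) ^ 2
      + (∑ j, ∑ j', k (Y j ω) (Y j' ω)) / (n₂ : ℝ) ^ 2
      - 2 * (∑ i, ∑ j, k (X i ω) (Y j ω)) / ((n₁ : ℝ) * (n₂ : ℝ))) :
    variance (fun ω => (n : ℝ) * Tn ω) P
      ≤ (2 / (((n₁ : ℝ) / (n : ℝ)) * ((n₂ : ℝ) / (n : ℝ))) ^ 2) * (∑' j, lam j ^ 2)
        + (16 / (n : ℝ)) * ((((n₁ : ℝ) / (n : ℝ))⁻¹) ^ 3 + (((n₂ : ℝ) / (n : ℝ))⁻¹) ^ 3)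
    ∧ ((16 / 0.1) * ((((n₁ : ℝ) / (n : ℝ))⁻¹) ^ 3 + 4 * (((n₂ : ℝ) / (n : ℝ))⁻¹) ^ 3) < (n : ℝ) →
      variance (fun ω => (n : ℝ) * Tn ω) P
        ≤ 32 / (((n₁ : ℝ) / (n : ℝ)) * ((n₂ : ℝ) / (n : ℝ))) ^ 2 + 0.1) :=
  null_variance_scaled_mmd_general p hp_cont hp_nonneg hp_int k hk_cont hk_symm hk_bdd kt hkt lam
    hlam_pos hlam_sum ψ hψ_cont hψ_on hMercer n₁ n₂ n hn hn₁_pos hn₂_pos P X Y hX_meas hY_meas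
    hX_law hY_law hindep Tn hTn
end

section
/- Let k̃ be a bounded measurable symmetric kernel on Ω × Ω with |k̃(x,y)| ≤ 4 for all x, y and ∫ k̃(x,z)p(z)dz = 0 for every x. If x_1, …, x_m are i.i.d. samples from p, then E[ (m⁻¹ Σ_{i,i'=1}^m k̃(x_i, x_{i'}))² ] = m⁻¹·E_{x∼p}[k̃(x,x)²] + (1 − 1/m)·(E_{x∼p}[k̃(x,x)])² + 2(1 − 1/m)·E_{x,x'∼p}[k̃(x,x')²], and in particular this second moment is at most (E_{x∼p}[k̃(x,x)])² + 2·E_{x,x'∼p}[k̃(x,x')²] + m⁻¹·E_{x∼p}[k̃(x,x)²]. -/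
open MeasureTheory ProbabilityTheory

/-!
Expanding the square gives `∑_{a,b,c,e} 𝔼[k(X_a,X_b) k(X_c,X_e)]`. If some index occurs exactly
once among `a, b, c, e`, that sample is independent of the others, and integrating it out first
kills the term by centring (after using symmetry to put it in a second slot). The surviving
patterns are `a = b = c = e`, giving `𝔼 k(x,x)²`; `a = b ≠ c = e`, giving `(𝔼 k(x,x))²` by
independence; and `{a, b} = {c, e}` with `a ≠ b`, giving `𝔼 k(x,x')²` in two ways. Counting them
yields `m 𝔼 k(x,x)² + (m² - m)((𝔼 k(x,x))² + 2 𝔼 k(x,x')²)`.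
-/

theorem ProbabilityTheory.IndepFun.integral_comp_eq_integral_integral
    {Ω α β : Type*} [MeasurableSpace Ω] [MeasurableSpace α] [MeasurableSpace β]
    {P : Measure Ω} [IsFiniteMeasure P] {Y : Ω → α} {Z : Ω → β}
    (hYZ : IndepFun Y Z P) (hY : AEMeasurable Y P) (hZ : AEMeasurable Z P) {f : α → β → ℝ}
    (hf : Integrable (Function.uncurry f) ((P.map Y).prod (P.map Z))) :
    ∫ ω, f (Y ω) (Z ω) ∂P = ∫ y, ∫ z, f y z ∂(P.map Z) ∂(P.map Y) := by
  rw [← hYZ.map_prod_eq_prod_map_map hY hZ] at hf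
  refine (integral_map (hY.prodMk hZ) hf.aestronglyMeasurable).symm.trans ?_
  rw [hYZ.map_prod_eq_prod_map_map hY hZ] at hf ⊢
  exact integral_prod _ hf

lemma integral_withDensity_ofReal_eq {α : Type*} [MeasurableSpace α] {ν : Measure α}
    {p : α → ℝ} (hp : Measurable p) (hp0 : 0 ≤ᵐ[ν] p) (g : α → ℝ) :
    ∫ x, g x ∂(ν.withDensity fun x => ENNReal.ofReal (p x)) = ∫ x, g x * p x ∂ν := by
  rw [integral_withDensity_eq_integral_toReal_smul hp.ennreal_ofReal
    (ae_of_all _ fun _ => ENNReal.ofReal_lt_top)]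
  refine integral_congr_ae ?_
  filter_upwards [hp0] with x hx
  rw [ENNReal.toReal_ofReal hx, smul_eq_mul, mul_comm]

lemma integrable_kernel_mul_kernel {α E : Type*} [MeasurableSpace α] [MeasurableSpace E]
    {ν : Measure α} [IsFiniteMeasure ν] {k : E → E → ℝ} {C : ℝ}
    (hk : Measurable (Function.uncurry k)) (hkC : ∀ y z, |k y z| ≤ C) {f g f' g' : α → E}
    (hf : Measurable f) (hg : Measurable g) (hf' : Measurable f') (hg' : Measurable g') :
    Integrable (fun x => k (f x) (g x) * k (f' x) (g' x)) ν := by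
  refine .of_bound ((hk.comp (hf.prodMk hg)).mul (hk.comp (hf'.prodMk hg'))).aestronglyMeasurable
    (C * C) (ae_of_all _ fun x => ?_)
  rw [norm_mul, Real.norm_eq_abs, Real.norm_eq_abs]
  exact mul_le_mul (hkC _ _) (hkC _ _) (abs_nonneg _) ((abs_nonneg _).trans (hkC (f x) (g x)))

section Pairings

variable {ι : Type*} [Fintype ι] [DecidableEq ι]

lemma sum_sum_ite_eq (x y : ℝ) : ∑ a : ι, ∑ b : ι, (if a = b then x else y)
    = Fintype.card ι * x + ((Fintype.card ι : ℝ) ^ 2 - Fintype.card ι) * y := by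
  have h (a b : ι) : (if a = b then x else y) = y + if a = b then x - y else 0 := by
    split_ifs <;> ring
  simp only [h, Finset.sum_add_distrib, Finset.sum_ite_eq, Finset.mem_univ, if_true,
    Finset.sum_const, Finset.card_univ, nsmul_eq_mul]
  ring

lemma sum_pairing_pattern (A B C : ℝ) :
    ∑ a : ι, ∑ b : ι, ∑ c : ι, ∑ e : ι,
      (if a = b then (if c = e then (if a = c then B else A ^ 2) else 0)
      else (if a = c ∧ b = e then C else 0) + (if a = e ∧ b = c then C else 0)) =
    Fintype.card ι * B + ((Fintype.card ι : ℝ) ^ 2 - Fintype.card ι) * (A ^ 2 + 2 * C) := by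
  have hdiag (a : ι) : ∑ c : ι, ∑ e : ι, (if c = e then (if a = c then B else A ^ 2) else 0)
      = B + (Fintype.card ι - 1) * A ^ 2 := by
    have h (c : ι) : (if a = c then B else A ^ 2) = A ^ 2 + if a = c then B - A ^ 2 else 0 := by
      split_ifs <;> ring
    simp only [Finset.sum_ite_eq, Finset.mem_univ, if_true, h, Finset.sum_add_distrib,
      Finset.sum_const, Finset.card_univ, nsmul_eq_mul]
    ring
  have hoff (a b : ι) : ∑ c : ι, ∑ e : ι,
      ((if a = c ∧ b = e then C else 0) + (if a = e ∧ b = c then C else 0)) = 2 * C := by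
    simp only [ite_and, Finset.sum_add_distrib, Finset.sum_ite_irrel, Finset.sum_ite_eq,
      Finset.mem_univ, if_true, Finset.sum_const_zero]
    ring
  have hrow (a b : ι) : ∑ c : ι, ∑ e : ι,
      (if a = b then (if c = e then (if a = c then B else A ^ 2) else 0)
      else (if a = c ∧ b = e then C else 0) + (if a = e ∧ b = c then C else 0)) =
      if a = b then B + (Fintype.card ι - 1) * A ^ 2 else 2 * C := by
    split_ifs with hab
    · exact hdiag a
    · exact hoff a b
  simp only [hrow, sum_sum_ite_eq]
  ring

end Pairings

section Sample

variable {Ω E ι : Type*} [MeasurableSpace Ω] [MeasurableSpace E] {P : Measure Ω}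
  {μ : Measure E} {X : ι → Ω → E} {k : E → E → ℝ} {C : ℝ}

lemma integral_kernel_mul_kernel_eq_zero [IsFiniteMeasure P] (hX : ∀ i, Measurable (X i))
    (hlaw : ∀ i, P.map (X i) = μ) (hind : iIndepFun X P) (hk : Measurable (Function.uncurry k))
    (hkC : ∀ y z, |k y z| ≤ C) (hk0 : ∀ y, ∫ z, k y z ∂μ = 0) {a b c e : ι}
    (hba : b ≠ a) (hbc : b ≠ c) (hbe : b ≠ e) :
    ∫ ω, k (X a ω) (X b ω) * k (X c ω) (X e ω) ∂P = 0 := by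
  classical
  set S : Finset ι := {a, c, e}
  have hY : Measurable fun ω (i : S) => X i ω := measurable_pi_lambda _ fun i => hX i
  have hYb : IndepFun (fun ω (i : S) => X i ω) (X b) P :=
    (hind.indepFun_finset S {b} (by simp [S, hba, hbc, hbe]) hX).comp measurable_id
      (measurable_pi_apply (⟨b, Finset.mem_singleton_self b⟩ : ({b} : Finset ι)))
  have hmem : a ∈ S ∧ c ∈ S ∧ e ∈ S := by simp [S]
  have hfubini := hYb.integral_comp_eq_integral_integral hY.aemeasurable (hX b).aemeasurable
    (f := fun y z => k (y ⟨a, hmem.1⟩) z * k (y ⟨c, hmem.2.1⟩) (y ⟨e, hmem.2.2⟩))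
    (integrable_kernel_mul_kernel hk hkC (measurable_pi_apply _ |>.comp measurable_fst)
      measurable_snd (measurable_pi_apply _ |>.comp measurable_fst)
      (measurable_pi_apply _ |>.comp measurable_fst))
  rw [hfubini, hlaw b]
  simp [integral_mul_const, hk0]

lemma integral_kernel_diag_mul_kernel_diag (hX : ∀ i, Measurable (X i))
    (hlaw : ∀ i, P.map (X i) = μ) (hind : iIndepFun X P) (hk : Measurable (Function.uncurry k))
    {a c : ι} (hac : a ≠ c) :
    ∫ ω, k (X a ω) (X a ω) * k (X c ω) (X c ω) ∂P = (∫ z, k z z ∂μ) ^ 2 := by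
  have hdiag : Measurable fun z => k z z := hk.comp (measurable_id.prodMk measurable_id)
  rw [(hind.indepFun hac).integral_fun_comp_mul_comp (hX a).aemeasurable (hX c).aemeasurable
    hdiag.aestronglyMeasurable hdiag.aestronglyMeasurable, sq]
  congr 1 <;> rw [← integral_map (hX _).aemeasurable hdiag.aestronglyMeasurable, hlaw]

lemma integral_kernel_diag_sq (hX : ∀ i, Measurable (X i)) (hlaw : ∀ i, P.map (X i) = μ)
    (hk : Measurable (Function.uncurry k)) (a : ι) :
    ∫ ω, k (X a ω) (X a ω) * k (X a ω) (X a ω) ∂P = ∫ z, k z z ^ 2 ∂μ := by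
  have hdiag : Measurable fun z => k z z := hk.comp (measurable_id.prodMk measurable_id)
  simp_rw [← sq]
  rw [← hlaw a, integral_map (hX a).aemeasurable (hdiag.pow_const 2).aestronglyMeasurable]

lemma integral_kernel_sq [IsFiniteMeasure P] (hX : ∀ i, Measurable (X i))
    (hlaw : ∀ i, P.map (X i) = μ) (hind : iIndepFun X P) (hk : Measurable (Function.uncurry k))
    (hkC : ∀ y z, |k y z| ≤ C) {a b : ι} (hab : a ≠ b) :
    ∫ ω, k (X a ω) (X b ω) * k (X a ω) (X b ω) ∂P = ∫ y, ∫ z, k y z ^ 2 ∂μ ∂μ := by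
  rw [(hind.indepFun hab).integral_comp_eq_integral_integral (hX a).aemeasurable
    (hX b).aemeasurable (f := fun y z => k y z * k y z)
    (integrable_kernel_mul_kernel hk hkC measurable_fst measurable_snd measurable_fst
      measurable_snd), hlaw, hlaw]
  simp_rw [sq]

lemma integral_kernel_mul_kernel_eq [IsFiniteMeasure P] [DecidableEq ι]
    (hX : ∀ i, Measurable (X i)) (hlaw : ∀ i, P.map (X i) = μ) (hind : iIndepFun X P)
    (hk : Measurable (Function.uncurry k)) (hkC : ∀ y z, |k y z| ≤ C)
    (hk_symm : ∀ y z, k y z = k z y) (hk0 : ∀ y, ∫ z, k y z ∂μ = 0) (a b c e : ι) :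
    ∫ ω, k (X a ω) (X b ω) * k (X c ω) (X e ω) ∂P =
      if a = b then
        (if c = e then (if a = c then ∫ z, k z z ^ 2 ∂μ else (∫ z, k z z ∂μ) ^ 2) else 0)
      else (if a = c ∧ b = e then ∫ y, ∫ z, k y z ^ 2 ∂μ ∂μ else 0)
        + (if a = e ∧ b = c then ∫ y, ∫ z, k y z ^ 2 ∂μ ∂μ else 0) := by
  have vanish {a b c e : ι} : b ≠ a → b ≠ c → b ≠ e →
      ∫ ω, k (X a ω) (X b ω) * k (X c ω) (X e ω) ∂P = 0 :=
    integral_kernel_mul_kernel_eq_zero hX hlaw hind hk hkC hk0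
  by_cases hab : a = b
  · subst hab
    by_cases hce : c = e
    · subst hce
      by_cases hac : a = c
      · subst hac
        simpa using integral_kernel_diag_sq hX hlaw hk a
      · simpa [hac] using integral_kernel_diag_mul_kernel_diag hX hlaw hind hk hac
    · simp only [if_neg hce, if_true]
      by_cases hea : e = a
      · subst hea
        simp only [mul_comm (k (X e _) (X e _)), hk_symm (X c _) (X e _)]
        exact vanish hce hce hce
      · simp only [mul_comm (k (X a _) (X a _))]
        exact vanish (Ne.symm hce) hea hea
  · simp only [if_neg hab]
    by_cases h1 : a = c ∧ b = e
    · obtain ⟨rfl, rfl⟩ := h1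
      simpa [hab] using integral_kernel_sq hX hlaw hind hk hkC hab
    by_cases h2 : a = e ∧ b = c
    · obtain ⟨rfl, rfl⟩ := h2
      simp only [hk_symm (X b _) (X a _)]
      simpa [hab, Ne.symm hab] using integral_kernel_sq hX hlaw hind hk hkC hab
    simp only [if_neg h1, if_neg h2, add_zero]
    by_cases hac : a = c
    · subst hac
      exact vanish (Ne.symm hab) (Ne.symm hab) fun hbe => h1 ⟨rfl, hbe⟩
    by_cases hae : a = e
    · subst hae
      exact vanish (Ne.symm hab) (fun hbc => h2 ⟨rfl, hbc⟩) (Ne.symm hab)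
    simp only [hk_symm (X a _) (X b _)]
    exact vanish hab hac hae

lemma integral_sq_sum_kernel [Fintype ι] [IsFiniteMeasure P]
    (hX : ∀ i, Measurable (X i)) (hlaw : ∀ i, P.map (X i) = μ) (hind : iIndepFun X P)
    (hk : Measurable (Function.uncurry k)) (hkC : ∀ y z, |k y z| ≤ C)
    (hk_symm : ∀ y z, k y z = k z y) (hk0 : ∀ y, ∫ z, k y z ∂μ = 0) :
    ∫ ω, (∑ i, ∑ j, k (X i ω) (X j ω)) ^ 2 ∂P =
      Fintype.card ι * ∫ z, k z z ^ 2 ∂μ + ((Fintype.card ι : ℝ) ^ 2 - Fintype.card ι) *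
        ((∫ z, k z z ∂μ) ^ 2 + 2 * ∫ y, ∫ z, k y z ^ 2 ∂μ ∂μ) := by
  classical
  have hint (a b c e : ι) : Integrable (fun ω => k (X a ω) (X b ω) * k (X c ω) (X e ω)) P :=
    integrable_kernel_mul_kernel hk hkC (hX a) (hX b) (hX c) (hX e)
  have hexpand (ω : Ω) : (∑ i, ∑ j, k (X i ω) (X j ω)) ^ 2 =
      ∑ a, ∑ b, ∑ c, ∑ e, k (X a ω) (X b ω) * k (X c ω) (X e ω) := by
    simp_rw [sq, Finset.sum_mul, Finset.mul_sum]
  have hswap : ∫ ω, ∑ a, ∑ b, ∑ c, ∑ e, k (X a ω) (X b ω) * k (X c ω) (X e ω) ∂P =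
      ∑ a, ∑ b, ∑ c, ∑ e, ∫ ω, k (X a ω) (X b ω) * k (X c ω) (X e ω) ∂P := by
    rw [integral_finsetSum _ fun a _ => integrable_finsetSum _ fun b _ =>
      integrable_finsetSum _ fun c _ => integrable_finsetSum _ fun e _ => hint a b c e]
    refine Finset.sum_congr rfl fun a _ => ?_
    rw [integral_finsetSum _ fun b _ => integrable_finsetSum _ fun c _ =>
      integrable_finsetSum _ fun e _ => hint a b c e]
    refine Finset.sum_congr rfl fun b _ => ?_
    rw [integral_finsetSum _ fun c _ => integrable_finsetSum _ fun e _ => hint a b c e]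
    exact Finset.sum_congr rfl fun c _ => integral_finsetSum _ fun e _ => hint a b c e
  simp_rw [hexpand, hswap, integral_kernel_mul_kernel_eq hX hlaw hind hk hkC hk_symm hk0]
  exact sum_pairing_pattern _ _ _

end Sample

theorem centered_vstat_second_moment_general
    {d : ℕ}
    (p : EuclideanSpace ℝ (Fin d) → ℝ)
    (hp_cont : Continuous p) (hp_nonneg : ∀ x, 0 ≤ p x)
    (kt : EuclideanSpace ℝ (Fin d) → EuclideanSpace ℝ (Fin d) → ℝ)
    (hkt_meas : Measurable (Function.uncurry kt))
    (hkt_symm : ∀ x y, kt x y = kt y x)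
    (hkt_bdd : ∀ x y, |kt x y| ≤ 4)
    (hkt_centered : ∀ x, (∫ z, kt x z * p z) = 0)
    (m : ℕ) (hm : 0 < m)
    {Ω' : Type*} [MeasurableSpace Ω'] (P : Measure Ω') [IsProbabilityMeasure P]
    (x : Fin m → Ω' → EuclideanSpace ℝ (Fin d))
    (hx_meas : ∀ i, Measurable (x i))
    (hx_law : ∀ i, Measure.map (x i) P
      = volume.withDensity (fun z => ENNReal.ofReal (p z)))
    (hx_indep : iIndepFun x P) :
    (∫ ω, ((m : ℝ)⁻¹ * ∑ i, ∑ i', kt (x i ω) (x i' ω)) ^ 2 ∂P)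
      = (m : ℝ)⁻¹ * (∫ z, (kt z z) ^ 2 * p z)
        + (1 - 1 / (m : ℝ)) * (∫ z, kt z z * p z) ^ 2
        + 2 * (1 - 1 / (m : ℝ)) * (∫ z, ∫ w, (kt z w) ^ 2 * p z * p w)
    ∧ (∫ ω, ((m : ℝ)⁻¹ * ∑ i, ∑ i', kt (x i ω) (x i' ω)) ^ 2 ∂P)
      ≤ (∫ z, kt z z * p z) ^ 2
        + 2 * (∫ z, ∫ w, (kt z w) ^ 2 * p z * p w)
        + (m : ℝ)⁻¹ * (∫ z, (kt z z) ^ 2 * p z) := by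
  have hdensity := integral_withDensity_ofReal_eq (ν := volume) hp_cont.measurable
    (ae_of_all _ hp_nonneg)
  have hmoment := integral_sq_sum_kernel hx_meas hx_law hx_indep hkt_meas hkt_bdd hkt_symm
    fun y => (hdensity _).trans (hkt_centered y)
  have hC : ∫ z, ∫ w, kt z w ^ 2 ∂(volume.withDensity fun z => ENNReal.ofReal (p z))
      ∂(volume.withDensity fun z => ENNReal.ofReal (p z)) = ∫ z, ∫ w, kt z w ^ 2 * p z * p w := by
    simp_rw [hdensity, ← integral_mul_const]
    refine integral_congr_ae (ae_of_all _ fun z => integral_congr_ae (ae_of_all _ fun w => ?_))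
    ring
  rw [hdensity, hdensity, hC, Fintype.card_fin] at hmoment
  have hm' : (m : ℝ) ≠ 0 := by positivity
  have hmain : ∫ ω, ((m : ℝ)⁻¹ * ∑ i, ∑ i', kt (x i ω) (x i' ω)) ^ 2 ∂P
      = (m : ℝ)⁻¹ * (∫ z, (kt z z) ^ 2 * p z)
        + (1 - 1 / (m : ℝ)) * (∫ z, kt z z * p z) ^ 2
        + 2 * (1 - 1 / (m : ℝ)) * (∫ z, ∫ w, (kt z w) ^ 2 * p z * p w) := by
    simp_rw [mul_pow]
    rw [integral_const_mul, hmoment]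
    field_simp
    ring
  have hC0 : 0 ≤ ∫ z, ∫ w, (kt z w) ^ 2 * p z * p w := integral_nonneg fun z =>
    integral_nonneg fun w => mul_nonneg (mul_nonneg (sq_nonneg _) (hp_nonneg z)) (hp_nonneg w)
  refine ⟨hmain, hmain ▸ ?_⟩
  have hm1 : 0 < 1 / (m : ℝ) := by positivity
  nlinarith [mul_nonneg hm1.le (sq_nonneg (∫ z, kt z z * p z)), mul_nonneg hm1.le hC0]

/-- Let `k̃` be a bounded measurable symmetric kernel with
`|k̃(x,y)| ≤ 4` and `∫ k̃(x,z) p(z) dz = 0` for all `x`. If `x₁, …, x_m` are i.i.d.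
from `p`, then
`E[(m⁻¹ Σ_{i,i'} k̃(x_i,x_{i'}))²] = m⁻¹ E_p[k̃(x,x)²] + (1 − 1/m)(E_p[k̃(x,x)])²
  + 2(1 − 1/m) E_{x,x'∼p}[k̃(x,x')²]`,
and in particular this second moment is at most
`(E_p[k̃(x,x)])² + 2 E_{x,x'∼p}[k̃(x,x')²] + m⁻¹ E_p[k̃(x,x)²]`. -/
theorem centered_vstat_second_moment
    {d : ℕ}
    (Ω : Set (EuclideanSpace ℝ (Fin d))) (hΩ : IsCompact Ω)
    (p : EuclideanSpace ℝ (Fin d) → ℝ)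
    (hp_cont : Continuous p) (hp_nonneg : ∀ x, 0 ≤ p x)
    (hp_supp : ∀ x, x ∉ Ω → p x = 0) (hp_int : ∫ x, p x = 1)
    (kt : EuclideanSpace ℝ (Fin d) → EuclideanSpace ℝ (Fin d) → ℝ)
    (hkt_meas : Measurable (Function.uncurry kt))
    (hkt_symm : ∀ x y, kt x y = kt y x)
    (hkt_bdd : ∀ x y, |kt x y| ≤ 4)
    (hkt_centered : ∀ x, (∫ z, kt x z * p z) = 0)
    (m : ℕ) (hm : 0 < m)
    {Ω' : Type*} [MeasurableSpace Ω'] (P : Measure Ω') [IsProbabilityMeasure P]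
    (x : Fin m → Ω' → EuclideanSpace ℝ (Fin d))
    (hx_meas : ∀ i, Measurable (x i))
    (hx_law : ∀ i, Measure.map (x i) P
      = volume.withDensity (fun z => ENNReal.ofReal (p z)))
    (hx_indep : iIndepFun x P) :
    (∫ ω, ((m : ℝ)⁻¹ * ∑ i, ∑ i', kt (x i ω) (x i' ω)) ^ 2 ∂P)
      = (m : ℝ)⁻¹ * (∫ z, (kt z z) ^ 2 * p z)
        + (1 - 1 / (m : ℝ)) * (∫ z, kt z z * p z) ^ 2
        + 2 * (1 - 1 / (m : ℝ)) * (∫ z, ∫ w, (kt z w) ^ 2 * p z * p w)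
    ∧ (∫ ω, ((m : ℝ)⁻¹ * ∑ i, ∑ i', kt (x i ω) (x i' ω)) ^ 2 ∂P)
      ≤ (∫ z, kt z z * p z) ^ 2
        + 2 * (∫ z, ∫ w, (kt z w) ^ 2 * p z * p w)
        + (m : ℝ)⁻¹ * (∫ z, (kt z z) ^ 2 * p z) :=
  centered_vstat_second_moment_general p hp_cont hp_nonneg kt hkt_meas hkt_symm hkt_bdd hkt_centered
    m hm P x hx_meas hx_law hx_indep
end
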